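/- With K = F((X)), O = F[[X]], q = |F|, α(z) := X⁻¹z and β as in the previous statement: for odd n = 2ℓ+1, α^n(O) ∩ β^n(O) = Σ_{k=0}^{ℓ} F·X^{-(2k+1)} + O, and hence [α^n(O) : α^n(O) ∩ β^n(O)] = q^ℓ. -/

import Mathlib

open scoped Classical

noncomputable section

variable (F : Type*) [Field F]

/-- The part of a Laurent series supported on `{k | P k}`. -/
def lpart (P : ℤ → Prop) (z : LaurentSeries F) : LaurentSeries F :=
  { coeff := fun k => if P k then z.coeff k else 0,
    isPWO_support' := z.isPWO_support'.mono (fun k hk => by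
      by_cases h : P k <;> simp_all [Function.mem_support]) }

variable {F}

lemma lpart_add (P : ℤ → Prop) (a b : LaurentSeries F) :
    lpart F P (a + b) = lpart F P a + lpart F P b := by
  ext k
  simp only [lpart, HahnSeries.coeff_add]
  split <;> simp

variable (F)

/-- The variable `X` of the Laurent series field `K = F((X))`. -/
def lX : LaurentSeries F := HahnSeries.single 1 1

/-- The ring of formal power series `O = F[[X]]` as an additive subgroup of
`K = F((X))`. -/
def lO : AddSubgroup (LaurentSeries F) where
  carrier := {z | ∀ k < 0, z.coeff k = 0}
  zero_mem' := by intro k _; simp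
  add_mem' := by intro a b ha hb k hk; simp [ha k hk, hb k hk]
  neg_mem' := by intro a ha k hk; simp [ha k hk]


/-- `z⁽⁴⁾ := Σ_{k≥0} a_k X^k`, the part of degree `≥ 0`. -/
def part4 (z : LaurentSeries F) : LaurentSeries F := lpart F (fun k => 0 ≤ k) z

/-- `z⁽⁵⁾ := Σ_{k≥0} a_{-(2k+1)} X^{-(2k+1)}`, the negative odd-degree part. -/
def part5 (z : LaurentSeries F) : LaurentSeries F :=
  lpart F (fun k => k < 0 ∧ Odd k) z

/-- `z⁽⁶⁾ := Σ_{k≥1} a_{-2k} X^{-2k}`, the negative even-degree part. -/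
def part6 (z : LaurentSeries F) : LaurentSeries F :=
  lpart F (fun k => k < 0 ∧ Even k) z

/-- The additive endomorphism `β(z) := X⁻¹z⁽⁴⁾ + X⁻²z⁽⁵⁾ + z⁽⁶⁾` of `K`. -/
def betaK : AddMonoid.End (LaurentSeries F) :=
  AddMonoidHom.mk'
    (fun z => (lX F)⁻¹ * part4 F z + ((lX F)⁻¹) ^ 2 * part5 F z + part6 F z)
    (by
      intro a b
      simp only [part4, part5, part6, lpart_add, mul_add]
      ring)

/-- The one-dimensional subspace `F·X^{-m}` of `K = F((X))`, as an additive
subgroup. -/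
def Fline (m : ℕ) : AddSubgroup (LaurentSeries F) :=
  (AddMonoidHom.mk' (fun c : F => HahnSeries.C c * ((lX F)⁻¹) ^ m)
    (by intro a b; rw [map_add, add_mul])).range

/-- The additive endomorphism `α(z) := X⁻¹z` of `K`. -/
def alphaK : AddMonoid.End (LaurentSeries F) :=
  AddMonoidHom.mulLeft ((lX F)⁻¹)

/-!
`α^n(O)` consists of the series with no coefficient below degree `-n`. On `O` the map `β` is
multiplication by `X⁻¹`, so `O ⊆ β^n(O)`; `β` leaves every negative even coefficient unchanged, so
`β^n(O)` has none; and `β` moves a negative odd monomial down by two, so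
`X^{-(2k+1)} = β^{k+1}(1) ∈ β^n(O)` for `k < n`. Hence both `α^n(O)` and the intersection are
subgroups of series supported on a given set of degrees, and the index is `q` to the number of
negative even degrees `≥ -n`, which is `ℓ`.
-/

variable {F}

variable (F) in
def supported (S : Set ℤ) : AddSubgroup (LaurentSeries F) where
  carrier := {z | ∀ k ∉ S, z.coeff k = 0}
  zero_mem' _ _ := rfl
  add_mem' ha hb k hk := by simp [ha k hk, hb k hk]
  neg_mem' ha k hk := by simp [ha k hk]

theorem mem_supported {S : Set ℤ} {z : LaurentSeries F} :
    z ∈ supported F S ↔ ∀ k ∉ S, z.coeff k = 0 := Iff.rfl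

theorem supported_mono {S T : Set ℤ} (h : S ⊆ T) : supported F S ≤ supported F T :=
  fun _ hz k hk => hz k fun hkS => hk (h hkS)

theorem supported_inter (S T : Set ℤ) :
    supported F (S ∩ T) = supported F S ⊓ supported F T := by
  ext z
  simp only [AddSubgroup.mem_inf, mem_supported, Set.mem_inter_iff, not_and_or]
  exact ⟨fun h => ⟨fun k hk => h k (.inl hk), fun k hk => h k (.inr hk)⟩,
    fun ⟨hS, hT⟩ k => Or.rec (hS k) (hT k)⟩

theorem supported_empty : supported F ∅ = ⊥ :=
  eq_bot_iff.2 fun _ hz => HahnSeries.ext (funext fun k => hz k (Set.notMem_empty k))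

theorem lpart_add_lpart_not (P : ℤ → Prop) (z : LaurentSeries F) :
    lpart F P z + lpart F (¬ P ·) z = z := by
  ext k
  simp only [HahnSeries.coeff_add, lpart]
  split_ifs <;> simp_all

theorem supported_union (S T : Set ℤ) :
    supported F (S ∪ T) = supported F S ⊔ supported F T := by
  refine le_antisymm (fun z hz => ?_)
    (sup_le (supported_mono Set.subset_union_left) (supported_mono Set.subset_union_right))
  rw [← lpart_add_lpart_not (· ∈ S) z]
  refine add_mem (AddSubgroup.mem_sup_left fun k hk => if_neg hk)
    (AddSubgroup.mem_sup_right fun k hk => ?_)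
  by_cases hkS : k ∈ S
  · exact if_neg (not_not.2 hkS)
  · exact (if_pos hkS).trans (hz k fun h => h.elim hkS hk)

theorem supported_biUnion {ι : Type*} (s : Finset ι) (S : ι → Set ℤ) :
    supported F (⋃ i ∈ s, S i) = ⨆ i ∈ s, supported F (S i) := by
  induction s using Finset.induction_on with
  | empty => simp [supported_empty]
  | insert i s _ ih => rw [Finset.set_biUnion_insert, supported_union, ih, Finset.iSup_insert]

theorem relIndex_supported {S T : Set ℤ} (hS : S.IsPWO) :
    (supported F T).relIndex (supported F S) = Nat.card (↥(S \ T) → F) := by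
  let φ : LaurentSeries F →+ (↥(S \ T) → F) :=
    AddMonoidHom.pi fun i => HahnSeries.coeff.addMonoidHom (i : ℤ)
  have hker : φ.ker ⊓ supported F S = supported F T ⊓ supported F S := by
    ext z
    simp only [AddSubgroup.mem_inf, AddMonoidHom.mem_ker, funext_iff, mem_supported]
    refine and_congr_left fun hzS => ⟨fun h k hkT => ?_, fun h k => h k k.2.2⟩
    by_cases hkS : k ∈ S
    · exact h ⟨k, hkS, hkT⟩
    · exact hzS k hkS
  have hsurj : (supported F S).map φ = ⊤ := by
    refine eq_top_iff.2 fun v _ => ⟨⟨fun k => if h : k ∈ S \ T then v ⟨k, h⟩ else 0,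
      hS.mono fun k hk => by_contra fun h => hk (dif_neg fun h' => h h'.1)⟩, ?_, ?_⟩
    · exact fun k hk => dif_neg fun h => hk h.1
    · exact funext fun i => dif_pos i.2
  rw [← AddSubgroup.inf_relIndex_right, ← hker, AddSubgroup.inf_relIndex_right,
    AddSubgroup.relIndex_ker, hsurj, AddSubgroup.card_top]

section EndPow

variable {G : Type*} [AddGroup G] (f : AddMonoid.End G)

theorem AddSubgroup.map_pow_succ (K : AddSubgroup G) (n : ℕ) :
    K.map (f ^ (n + 1)) = (K.map (f ^ n)).map f := by
  rw [pow_succ']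
  exact (AddSubgroup.map_map _ _ _).symm

theorem AddSubgroup.le_map_pow {K : AddSubgroup G} (h : K ≤ K.map f) (n : ℕ) :
    K ≤ K.map (f ^ n) := by
  induction n with
  | zero => exact (AddSubgroup.map_id K).ge
  | succ n ih => rw [AddSubgroup.map_pow_succ]; exact h.trans (AddSubgroup.map_mono ih)

theorem AddSubgroup.map_pow_le {H K : AddSubgroup G} (hK : K.map f ≤ K) (hH : H ≤ K) (n : ℕ) :
    H.map (f ^ n) ≤ K := by
  induction n with
  | zero => exact (AddSubgroup.map_id H).le.trans hH
  | succ n ih => rw [AddSubgroup.map_pow_succ]; exact (AddSubgroup.map_mono ih).trans hK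

end EndPow

theorem lO_eq_supported : lO F = supported F (Set.Ici 0) := by
  ext z
  simp only [mem_supported, Set.mem_Ici, not_le]
  rfl

theorem lXinv_pow (m : ℕ) : (lX F)⁻¹ ^ m = HahnSeries.single (-(m : ℤ)) 1 := by
  rw [lX, HahnSeries.inv_single, inv_one, HahnSeries.single_pow, one_pow, smul_neg, nsmul_one]

theorem coeff_lXinv_pow_mul (m : ℕ) (z : LaurentSeries F) (k : ℤ) :
    ((lX F)⁻¹ ^ m * z).coeff k = z.coeff (k + m) := by
  rw [lXinv_pow, HahnSeries.coeff_single_mul, one_mul, sub_neg_eq_add]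

theorem lXinv_pow_mul_single (m : ℕ) (a : ℤ) (c : F) :
    (lX F)⁻¹ ^ m * HahnSeries.single a c = HahnSeries.single (a - m) c := by
  rw [lXinv_pow, HahnSeries.single_mul_single, one_mul, neg_add_eq_sub]

theorem coeff_lX_pow_mul (m : ℕ) (z : LaurentSeries F) (k : ℤ) :
    (lX F ^ m * z).coeff k = z.coeff (k - m) := by
  rw [lX, HahnSeries.single_pow, one_pow, nsmul_one, HahnSeries.coeff_single_mul, one_mul]

theorem lX_ne_zero : lX F ≠ 0 := HahnSeries.single_ne_zero one_ne_zero

theorem single_coeff_eq_of_mem_supported_singleton {a : ℤ} {w : LaurentSeries F}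
    (hw : w ∈ supported F {a}) : HahnSeries.single a (w.coeff a) = w := by
  ext k
  rcases eq_or_ne k a with rfl | hk
  · rw [HahnSeries.coeff_single_same]
  · rw [HahnSeries.coeff_single_of_ne hk, hw k hk]

theorem Fline_eq_supported (m : ℕ) : Fline F m = supported F {-(m : ℤ)} := by
  have hline (c : F) : HahnSeries.C c * (lX F)⁻¹ ^ m = HahnSeries.single (-(m : ℤ)) c := by
    rw [HahnSeries.C_apply, lXinv_pow, HahnSeries.single_mul_single, zero_add, mul_one]
  ext w
  refine ⟨?_, fun hw => ⟨w.coeff (-m), ?_⟩⟩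
  · rintro ⟨c, rfl⟩ k hk
    rw [AddMonoidHom.mk'_apply, hline, HahnSeries.coeff_single_of_ne hk]
  · rw [AddMonoidHom.mk'_apply, hline]
    exact single_coeff_eq_of_mem_supported_singleton hw

theorem alphaK_pow (n : ℕ) : alphaK F ^ n = AddMonoidHom.mulLeft ((lX F)⁻¹ ^ n) := by
  induction n with
  | zero => exact AddMonoidHom.ext fun z => (one_mul z).symm
  | succ n ih =>
    refine AddMonoidHom.ext fun z => ?_
    rw [pow_succ', ih]
    show (lX F)⁻¹ * ((lX F)⁻¹ ^ n * z) = (lX F)⁻¹ ^ (n + 1) * z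
    rw [pow_succ', mul_assoc]

theorem map_alphaK_pow_lO (n : ℕ) :
    (lO F).map (alphaK F ^ n) = supported F (Set.Ici (-(n : ℤ))) := by
  ext w
  rw [alphaK_pow, AddSubgroup.mem_map]
  simp only [AddMonoidHom.coe_mulLeft, mem_supported, Set.mem_Ici, not_le]
  constructor
  · rintro ⟨z, hz, rfl⟩ k hk
    rw [coeff_lXinv_pow_mul]
    exact hz _ (by omega)
  · intro hw
    refine ⟨lX F ^ n * w, fun k hk => ?_, ?_⟩
    · rw [coeff_lX_pow_mul]
      exact hw _ (by omega)
    · rw [← mul_assoc, ← mul_pow, inv_mul_cancel₀ lX_ne_zero, one_pow, one_mul]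

theorem lpart_eq_self {P : ℤ → Prop} {z : LaurentSeries F} (h : ∀ k, ¬P k → z.coeff k = 0) :
    lpart F P z = z := by
  ext k
  by_cases hk : P k
  · exact if_pos hk
  · exact (if_neg hk).trans (h k hk).symm

theorem lpart_eq_zero {P : ℤ → Prop} {z : LaurentSeries F} (h : ∀ k, P k → z.coeff k = 0) :
    lpart F P z = 0 := by
  ext k
  by_cases hk : P k
  · exact (if_pos hk).trans (h k hk)
  · exact if_neg hk

theorem lpart_single (P : ℤ → Prop) (a : ℤ) (c : F) :
    lpart F P (HahnSeries.single a c) = if P a then HahnSeries.single a c else 0 := by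
  split_ifs with ha
  · exact lpart_eq_self fun k hk => HahnSeries.coeff_single_of_ne fun h => hk (h ▸ ha)
  · exact lpart_eq_zero fun k hk => HahnSeries.coeff_single_of_ne fun h => ha (h ▸ hk)

theorem betaK_apply (z : LaurentSeries F) :
    betaK F z = (lX F)⁻¹ * part4 F z + (lX F)⁻¹ ^ 2 * part5 F z + part6 F z := rfl

theorem betaK_of_mem_lO {z : LaurentSeries F} (hz : z ∈ lO F) : betaK F z = (lX F)⁻¹ * z := by
  rw [betaK_apply, part4, part5, part6, lpart_eq_self fun k hk => hz k (not_le.1 hk),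
    lpart_eq_zero fun k hk => hz k hk.1, lpart_eq_zero fun k hk => hz k hk.1,
    mul_zero, add_zero, add_zero]

theorem betaK_single_of_neg_of_odd {a : ℤ} (ha : a < 0) (hodd : Odd a) (c : F) :
    betaK F (HahnSeries.single a c) = HahnSeries.single (a - 2) c := by
  have hev : ¬Even a := Int.not_even_iff_odd.2 hodd
  rw [betaK_apply, part4, part5, part6, lpart_single, lpart_single, lpart_single,
    if_neg (not_le.2 ha), if_pos ⟨ha, hodd⟩, if_neg fun h => hev h.2, mul_zero, zero_add,
    add_zero, lXinv_pow_mul_single]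
  rfl

theorem coeff_betaK_of_neg_of_even (z : LaurentSeries F) {k : ℤ} (hk : k < 0) (hev : Even k) :
    (betaK F z).coeff k = z.coeff k := by
  have hodd : ¬Odd (k + 2) := Int.not_odd_iff_even.2 (by simpa [parity_simps] using hev)
  rw [betaK_apply, HahnSeries.coeff_add, HahnSeries.coeff_add]
  nth_rewrite 1 [← pow_one (lX F)⁻¹]
  rw [coeff_lXinv_pow_mul, coeff_lXinv_pow_mul, part4, part5, part6]
  simp only [lpart, Nat.cast_one, Nat.cast_ofNat]
  rw [if_neg (by obtain ⟨m, rfl⟩ := hev; omega), if_neg fun h => hodd h.2, if_pos ⟨hk, hev⟩,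
    zero_add, zero_add]

theorem lX_mul_mem_lO {z : LaurentSeries F} (hz : z ∈ lO F) : lX F * z ∈ lO F := fun k hk => by
  rw [← pow_one (lX F), coeff_lX_pow_mul]
  exact hz _ (by omega)

theorem lO_le_map_betaK : lO F ≤ (lO F).map (betaK F) := fun z hz =>
  ⟨lX F * z, lX_mul_mem_lO hz,
    (betaK_of_mem_lO (lX_mul_mem_lO hz)).trans (inv_mul_cancel_left₀ lX_ne_zero z)⟩

theorem map_betaK_pow_lO_le (n : ℕ) :
    (lO F).map (betaK F ^ n) ≤ supported F {k | 0 ≤ k ∨ Odd k} := by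
  refine AddSubgroup.map_pow_le _ ?_ ?_ n
  · rintro _ ⟨z, hz, rfl⟩ k hk
    obtain ⟨hneg, hev⟩ : k < 0 ∧ Even k := by simpa [Int.not_odd_iff_even] using hk
    exact (coeff_betaK_of_neg_of_even z hneg hev).trans
      (hz k fun h => h.elim hneg.not_ge (Int.not_odd_iff_even.2 hev))
  · rw [lO_eq_supported]
    exact supported_mono fun k hk => Or.inl hk

theorem single_mem_map_betaK_pow {k n : ℕ} (hk : k < n) (c : F) :
    HahnSeries.single (-((2 * k + 1 : ℕ) : ℤ)) c ∈ (lO F).map (betaK F ^ n) := by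
  obtain ⟨m, rfl⟩ : ∃ m, n = m + 1 := ⟨n - 1, by omega⟩
  rw [AddSubgroup.map_pow_succ]
  induction k generalizing m with
  | zero =>
    have h0 : HahnSeries.single 0 c ∈ lO F := fun j hj => HahnSeries.coeff_single_of_ne hj.ne
    have hβ : betaK F (HahnSeries.single 0 c) = HahnSeries.single (-1) c := by
      rw [betaK_of_mem_lO h0, ← pow_one (lX F)⁻¹, lXinv_pow_mul_single]
      rfl
    exact ⟨_, AddSubgroup.le_map_pow _ lO_le_map_betaK _ h0, hβ⟩
  | succ k ih =>
    obtain ⟨m, rfl⟩ : ∃ m', m = m' + 1 := ⟨m - 1, by omega⟩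
    have hβ : betaK F (HahnSeries.single (-((2 * k + 1 : ℕ) : ℤ)) c) =
        HahnSeries.single (-((2 * (k + 1) + 1 : ℕ) : ℤ)) c := by
      rw [betaK_single_of_neg_of_odd (by omega) ⟨-(k : ℤ) - 1, by push_cast; ring⟩]
      congr 1
    refine ⟨_, ?_, hβ⟩
    rw [AddSubgroup.map_pow_succ]
    exact ih m (by omega)

theorem Fline_le_map_betaK_pow {k n : ℕ} (hk : k < n) :
    Fline F (2 * k + 1) ≤ (lO F).map (betaK F ^ n) := by
  intro w hw
  rw [Fline_eq_supported] at hw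
  rw [← single_coeff_eq_of_mem_supported_singleton hw]
  exact single_mem_map_betaK_pow hk _

theorem Ici_inter_nonneg_or_odd (ℓ : ℕ) :
    Set.Ici (-((2 * ℓ + 1 : ℕ) : ℤ)) ∩ {k | 0 ≤ k ∨ Odd k} =
      (⋃ k ∈ Finset.range (ℓ + 1), {-((2 * k + 1 : ℕ) : ℤ)}) ∪ Set.Ici 0 := by
  ext j
  simp only [Set.mem_inter_iff, Set.mem_Ici, Set.mem_ofPred_eq, Set.mem_union, Set.mem_iUnion,
    Set.mem_singleton_iff, Finset.mem_range, exists_prop, Int.odd_iff]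
  push_cast
  constructor
  · rintro ⟨hj, hj' | hj'⟩
    · exact .inr hj'
    · by_cases h0 : 0 ≤ j
      · exact .inr h0
      · exact .inl ⟨(-(j + 1) / 2).toNat, by omega, by omega⟩
  · rintro (⟨k, hk, rfl⟩ | h) <;> omega

theorem Ici_diff_nonneg_or_odd (ℓ : ℕ) :
    Set.Ici (-((2 * ℓ + 1 : ℕ) : ℤ)) \ {k | 0 ≤ k ∨ Odd k} =
      ((Finset.range ℓ).image fun i : ℕ => -(2 * (i : ℤ) + 2) : Set ℤ) := by
  ext j
  simp only [Set.mem_sdiff, Set.mem_Ici, Set.mem_ofPred_eq, Finset.coe_image, Finset.coe_range,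
    Set.mem_image, Set.mem_Iio, not_or, not_le, Int.not_odd_iff_even, Int.even_iff]
  push_cast
  constructor
  · rintro ⟨hj, hneg, hev⟩
    exact ⟨(-(j + 2) / 2).toNat, by omega, by omega⟩
  · rintro ⟨i, hi, rfl⟩
    omega

/-- With `K = F((X))`, `O = F[[X]]`, `q = |F|`, `α(z) := X⁻¹z`
and `β(z) := X⁻¹z⁽⁴⁾ + X⁻²z⁽⁵⁾ + z⁽⁶⁾`: for odd `n = 2ℓ+1`,
`α^n(O) ∩ β^n(O) = Σ_{k=0}^{ℓ} F·X^{-(2k+1)} + O`, and hence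
`[α^n(O) : α^n(O) ∩ β^n(O)] = q^ℓ`. -/
theorem stmt13 (F : Type*) [Field F] [Fintype F] :
    ∀ ℓ : ℕ, ∀ n : ℕ, n = 2 * ℓ + 1 →
      ((lO F).map ((alphaK F) ^ n : AddMonoid.End _) ⊓
          (lO F).map ((betaK F) ^ n : AddMonoid.End _) =
        (⨆ k ∈ Finset.range (ℓ + 1), Fline F (2 * k + 1)) ⊔ lO F) ∧
      AddSubgroup.relIndex ((lO F).map ((betaK F) ^ n : AddMonoid.End _))
          ((lO F).map ((alphaK F) ^ n : AddMonoid.End _)) =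
        (Fintype.card F) ^ ℓ := by
  rintro ℓ n rfl
  have hR : (⨆ k ∈ Finset.range (ℓ + 1), Fline F (2 * k + 1)) ⊔ lO F =
      supported F (Set.Ici (-((2 * ℓ + 1 : ℕ) : ℤ)) ∩ {k | 0 ≤ k ∨ Odd k}) := by
    simp only [Ici_inter_nonneg_or_odd, supported_union, supported_biUnion, Fline_eq_supported,
      lO_eq_supported]
  have hinter : (lO F).map (alphaK F ^ (2 * ℓ + 1)) ⊓ (lO F).map (betaK F ^ (2 * ℓ + 1)) =
      (⨆ k ∈ Finset.range (ℓ + 1), Fline F (2 * k + 1)) ⊔ lO F := by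
    refine le_antisymm ?_ (le_inf ?_ ?_)
    · rw [hR, supported_inter, map_alphaK_pow_lO]
      exact inf_le_inf_left _ (map_betaK_pow_lO_le _)
    · rw [hR, map_alphaK_pow_lO]
      exact supported_mono Set.inter_subset_left
    · refine sup_le (iSup₂_le fun k hk => Fline_le_map_betaK_pow ?_)
        (AddSubgroup.le_map_pow _ lO_le_map_betaK _)
      rw [Finset.mem_range] at hk
      omega
  refine ⟨hinter, ?_⟩
  rw [← AddSubgroup.inf_relIndex_right, inf_comm, hinter, hR, map_alphaK_pow_lO,
    relIndex_supported (BddBelow.isWF bddBelow_Ici).isPWO, Set.sdiff_self_inter,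
    Ici_diff_nonneg_or_odd, Nat.card_fun, Nat.card_coe_set_eq, Set.ncard_coe_finset,
    Finset.card_image_of_injective _ fun i j h => by simpa using h, Finset.card_range,
    Nat.card_eq_fintype_card]

end
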